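/- arXiv:1901.05631 — 2 statements merged into one kernel-verified Lean document; each statement's English description precedes it below -/
import Mathlib

section
/- Let (Ω, F, (F_t)_{t∈[0,T]}, P) be a filtered probability space, T > 0 and C ≥ 0. For each j ∈ ℕ let (μ_j(t))_{t∈[0,T]} be an (F_t)-adapted process taking values in the Borel probability measures on ℝ^d, whose sample paths t ↦ μ_j(t) are continuous with respect to d_BL. Assume that for each j the real-valued process t ↦ e^{Ct}(∫|x|² dμ_j(t)(x) + 1) is an (F_t)-submartingale, and that sup_{j∈ℕ} E ∫|x|² dμ_j(T)(x) < ∞. Then for every δ > 0 there exists a set K_δ of Borel probability measures on ℝ^d, compact in the topology of weak convergence, such that for every j, P( μ_j(t) ∈ K_δ^δ for all t ∈ [0,T] ) ≥ 1 − δ, where K_δ^δ = { μ : there exists η ∈ K_δ with d_BL(μ, η) < δ }. -/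
/-!
Along a countable dense set of times, Doob's maximal inequality for the nonnegative submartingale
`e^{Ct}(∫ |x|² dμ_j(t) + 1)` bounds all second moments by `λ = e^{CT}(B + 1)/δ` outside an event
of probability at most `δ`. By Markov's inequality the probability measures with second moment at
most `λ` form a tight set, whose closure `K` is compact by Prokhorov's theorem. Continuity of the
paths in `dBL` then puts every `μ_j(t)`, not only those at the dense times, within `δ` of `K`.
-/

open MeasureTheory
open scoped ENNReal NNReal

/-- Bounded Lipschitz distance between Borel measures on `ℝ^d`. -/
noncomputable def dBL {d : ℕ} (μ η : Measure (EuclideanSpace ℝ (Fin d))) : ℝ :=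
  sSup {r : ℝ | ∃ f : EuclideanSpace ℝ (Fin d) → ℝ,
    (∀ x, |f x| ≤ 1) ∧ LipschitzWith 1 f ∧ r = |(∫ x, f x ∂μ) - ∫ x, f x ∂η|}

open Filter Topology Set

lemma dBL_comm {d : ℕ} (μ η : Measure (EuclideanSpace ℝ (Fin d))) : dBL μ η = dBL η μ := by
  simp only [dBL, abs_sub_comm]

lemma exists_mem_dBL_lt_of_denseRange {d : ℕ}
    {ν : ℝ → ProbabilityMeasure (EuclideanSpace ℝ (Fin d))}
    {s : Set ℝ} {u : ℕ → s} (hu : DenseRange u) {S : Set (ProbabilityMeasure _)}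
    (hS : ∀ n, ν (u n) ∈ S)
    (hcont : ∀ t ∈ s, ∀ ε > 0, ∃ δ > 0, ∀ r ∈ s,
      |r - t| < δ → dBL (ν r).toMeasure (ν t).toMeasure < ε)
    {t : ℝ} (ht : t ∈ s) {δ : ℝ} (hδ : 0 < δ) : ∃ η ∈ S, dBL (ν t).toMeasure η.toMeasure < δ := by
  obtain ⟨r, hr, hnear⟩ := hcont t ht δ hδ
  obtain ⟨n, hn⟩ := Metric.denseRange_iff.1 hu ⟨t, ht⟩ r hr
  refine ⟨ν (u n), hS n, ?_⟩
  rw [dBL_comm]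
  refine hnear _ (u n).2 ?_
  rwa [Subtype.dist_eq, Real.dist_eq, abs_sub_comm] at hn

section Tightness

variable {E : Type*} [NormedAddCommGroup E] [MeasurableSpace E] [ProperSpace E]

lemma isTightMeasureSet_of_integral_norm_sq_le [OpensMeasurableSpace E]
    {S : Set (Measure E)} {c : ℝ} (hint : ∀ μ ∈ S, Integrable (fun x => ‖x‖ ^ 2) μ)
    (hle : ∀ μ ∈ S, ∫ x, ‖x‖ ^ 2 ∂μ ≤ c) : IsTightMeasureSet S := by
  refine isTightMeasureSet_of_tendsto_measure_norm_gt ?_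
  have hlim : Tendsto (fun r : ℝ => ENNReal.ofReal (c / r ^ 2)) atTop (𝓝 0) := by
    simpa using ENNReal.tendsto_ofReal
      (tendsto_const_nhds.div_atTop (tendsto_pow_atTop two_ne_zero))
  refine tendsto_of_tendsto_of_tendsto_of_le_of_le' tendsto_const_nhds hlim
    (.of_forall fun _ => zero_le) ?_
  filter_upwards [eventually_gt_atTop 0] with r hr
  refine iSup₂_le fun μ hμ => ?_
  have hr2 : ENNReal.ofReal (r ^ 2) ≠ 0 := by simp [hr.ne']
  calc μ {x | r < ‖x‖} ≤ μ {x | ENNReal.ofReal (r ^ 2) ≤ ENNReal.ofReal (‖x‖ ^ 2)} :=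
        measure_mono fun x hx => ENNReal.ofReal_le_ofReal (pow_le_pow_left₀ hr.le (le_of_lt hx) 2)
    _ ≤ (∫⁻ x, ENNReal.ofReal (‖x‖ ^ 2) ∂μ) / ENNReal.ofReal (r ^ 2) :=
        meas_ge_le_lintegral_div (by fun_prop) hr2 ENNReal.ofReal_ne_top
    _ = ENNReal.ofReal ((∫ x, ‖x‖ ^ 2 ∂μ) / r ^ 2) := by
        rw [← ofReal_integral_eq_lintegral_ofReal (hint μ hμ) (ae_of_all _ fun x => by positivity),
          ENNReal.ofReal_div_of_pos (by positivity)]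
    _ ≤ ENNReal.ofReal (c / r ^ 2) := by gcongr; exact hle μ hμ

lemma isCompact_closure_setOf_integral_norm_sq_le [BorelSpace E] (c : ℝ) :
    IsCompact (closure {ν : ProbabilityMeasure E |
      Integrable (fun x => ‖x‖ ^ 2) ν.toMeasure ∧ ∫ x, ‖x‖ ^ 2 ∂ν.toMeasure ≤ c}) := by
  refine isCompact_closure_of_isTightMeasureSet
    (isTightMeasureSet_of_integral_norm_sq_le (c := c) ?_ ?_)
  · rintro _ ⟨ν, hν, rfl⟩; exact hν.1
  · rintro _ ⟨ν, hν, rfl⟩; exact hν.2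

end Tightness

namespace MeasureTheory

def Filtration.restrict {ι Ω : Type*} [Preorder ι] {m : MeasurableSpace Ω} (ℱ : Filtration ι m)
    (s : Set ι) : Filtration s m :=
  ⟨fun t => ℱ t, fun _ _ h => ℱ.mono h, fun t => ℱ.le t⟩

variable {ι Ω : Type*} [LinearOrder ι] {m0 : MeasurableSpace Ω} {P : Measure Ω} [IsFiniteMeasure P]
  {ℱ : Filtration ι m0} {X : ι → Ω → ℝ}

theorem Submartingale.maximal_ineq_of_finset (hX : Submartingale X ℱ P)
    (hnonneg : 0 ≤ X) {F : Finset ι} {T : ι} (hF : ∀ t ∈ F, t ≤ T) (ε : ℝ≥0) :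
    ε * P {ω | ∃ t ∈ F, (ε : ℝ) ≤ X t ω} ≤ ENNReal.ofReal (∫ ω, X T ω ∂P) := by
  set G := insert T F
  set N := G.card - 1
  have hN : G.card = N + 1 :=
    (Nat.succ_pred_eq_of_pos (Finset.card_pos.2 (Finset.insert_nonempty _ _))).symm
  set e := G.orderEmbOfFin hN
  -- enumerate `G` increasingly, then stay at its maximum `T`
  let τ : ℕ → ι := fun i => e ⟨min i N, by omega⟩
  have hτ : Monotone τ := fun i k h => e.monotone (Fin.mk_le_mk.2 (min_le_min_right _ h))
  have hτN : τ N = T := by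
    simp only [τ, min_self]
    refine (Finset.orderEmbOfFin_last hN N.succ_pos).trans (le_antisymm ?_ ?_)
    exacts [Finset.max'_le _ _ _ (by simpa [G] using hF),
      Finset.le_max' _ _ (Finset.mem_insert_self _ _)]
  let 𝒢 : Filtration ℕ m0 := ⟨fun i => ℱ (τ i), fun _ _ h => ℱ.mono (hτ h), fun _ => ℱ.le _⟩
  have hY : Submartingale (fun i => X (τ i)) 𝒢 P :=
    ⟨fun i => hX.stronglyAdapted (τ i), fun _ _ h => hX.ae_le_condExp (hτ h),
      fun _ => hX.integrable _⟩
  have hsub : {ω | ∃ t ∈ F, (ε : ℝ) ≤ X t ω} ⊆ {ω | (ε : ℝ) ≤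
      (Finset.range (N + 1)).sup' Finset.nonempty_range_add_one fun k => X (τ k) ω} := by
    rintro ω ⟨t, ht, hεt⟩
    obtain ⟨i, rfl⟩ : t ∈ Set.range e := by
      rw [Finset.range_orderEmbOfFin]; exact Finset.mem_insert_of_mem ht
    have hi : τ i = e i := by simp only [τ, min_eq_left (Nat.le_of_lt_succ i.2)]
    exact hεt.trans (hi ▸ Finset.le_sup' (fun k => X (τ k) ω) (Finset.mem_range.2 i.2))
  calc ε * P {ω | ∃ t ∈ F, (ε : ℝ) ≤ X t ω}
      ≤ ε * P {ω | (ε : ℝ) ≤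
          (Finset.range (N + 1)).sup' Finset.nonempty_range_add_one fun k => X (τ k) ω} := by
        gcongr
    _ ≤ _ := maximal_ineq hY (fun i => hnonneg (τ i)) N
    _ ≤ ENNReal.ofReal (∫ ω, X T ω ∂P) := by
        rw [← hτN]
        exact ENNReal.ofReal_le_ofReal
          (setIntegral_le_integral (hX.integrable _) (ae_of_all _ (hnonneg _)))

theorem Submartingale.maximal_ineq_of_seq (hX : Submartingale X ℱ P)
    (hnonneg : 0 ≤ X) {u : ℕ → ι} {T : ι} (hu : ∀ n, u n ≤ T) (ε : ℝ≥0) :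
    ε * P {ω | ∃ n, (ε : ℝ) ≤ X (u n) ω} ≤ ENNReal.ofReal (∫ ω, X T ω ∂P) := by
  have hunion : {ω | ∃ n, (ε : ℝ) ≤ X (u n) ω} =
      ⋃ N, {ω | ∃ t ∈ (Finset.range N).image u, (ε : ℝ) ≤ X t ω} := by
    ext ω
    simp only [mem_ofPred_eq, mem_iUnion, Finset.mem_image, Finset.mem_range]
    exact ⟨fun ⟨n, hn⟩ => ⟨n + 1, u n, ⟨n, n.lt_succ_self, rfl⟩, hn⟩,
      fun ⟨_, _, ⟨n, _, rfl⟩, hn⟩ => ⟨n, hn⟩⟩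
  have hmono : Monotone fun N => {ω | ∃ t ∈ (Finset.range N).image u, (ε : ℝ) ≤ X t ω} :=
    fun N M h ω ⟨t, ht, hεt⟩ =>
      ⟨t, Finset.image_subset_image (Finset.range_subset_range.2 h) ht, hεt⟩
  rw [hunion, hmono.measure_iUnion, ENNReal.mul_iSup]
  refine iSup_le fun N => hX.maximal_ineq_of_finset hnonneg ?_ ε
  simpa using fun n _ => hu n

theorem Submartingale.measure_exists_div_le_le (hX : Submartingale X ℱ P) (hnonneg : 0 ≤ X)
    {u : ℕ → ι} {T : ι} (hu : ∀ n, u n ≤ T) {M δ : ℝ} (hM : 0 < M) (hδ : 0 < δ)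
    (hXT : ∫ ω, X T ω ∂P ≤ M) : P {ω | ∃ n, M / δ ≤ X (u n) ω} ≤ ENNReal.ofReal δ := by
  set ε : ℝ≥0 := ⟨M / δ, by positivity⟩
  have hε : (ε : ℝ≥0∞) ≠ 0 := by
    have : (0 : ℝ) < ε := div_pos hM hδ
    exact_mod_cast this.ne'
  have hεδ : ENNReal.ofReal M = ε * ENNReal.ofReal δ := by
    rw [← ENNReal.ofReal_coe_nnreal, ← ENNReal.ofReal_mul (by positivity)]
    exact congrArg ENNReal.ofReal (div_mul_cancel₀ _ hδ.ne').symm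
  rw [← ENNReal.mul_le_mul_iff_right hε ENNReal.coe_ne_top, ← hεδ]
  exact (hX.maximal_ineq_of_seq hnonneg hu ε).trans (ENNReal.ofReal_le_ofReal hXT)

end MeasureTheory

lemma integral_mul_add_one_le {Ω : Type*} [MeasurableSpace Ω] {P : Measure Ω}
    [IsProbabilityMeasure P] {f : Ω → ℝ} {a B : ℝ} (ha : 0 < a)
    (hf : Integrable (fun ω => a * (f ω + 1)) P) (hB : ∫ ω, f ω ∂P ≤ B) :
    ∫ ω, a * (f ω + 1) ∂P ≤ a * (B + 1) := by
  have hfint : Integrable f P := by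
    refine ((hf.const_mul a⁻¹).sub (integrable_const 1)).congr (ae_of_all _ fun ω => ?_)
    simp only [Pi.sub_apply, inv_mul_cancel_left₀ ha.ne', add_sub_cancel_right]
  rw [integral_const_mul, integral_add hfint (integrable_const 1), integral_const, probReal_univ,
    smul_eq_mul, mul_one]
  gcongr

lemma ofReal_one_sub_le_measure_of_compl_subset {Ω : Type*} [MeasurableSpace Ω] {P : Measure Ω}
    [IsProbabilityMeasure P] {A S : Set Ω} {δ : ℝ} (hδ : 0 ≤ δ) (hA : P A ≤ ENNReal.ofReal δ)
    (hS : Aᶜ ⊆ S) : ENNReal.ofReal (1 - δ) ≤ P S :=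
  calc ENNReal.ofReal (1 - δ) = 1 - ENNReal.ofReal δ := by
        rw [ENNReal.ofReal_sub _ hδ, ENNReal.ofReal_one]
    _ ≤ 1 - P A := tsub_le_tsub_left hA 1
    _ ≤ P Aᶜ := tsub_le_iff_left.2 (by simpa using measure_union_le (μ := P) A Aᶜ)
    _ ≤ P S := measure_mono hS

theorem stmt7_general {d : ℕ} {Ω : Type*} [mΩ : MeasurableSpace Ω]
    (P : Measure Ω) [IsProbabilityMeasure P]
    (ℱ : Filtration ℝ mΩ) (T C : ℝ) (hT : 0 < T) (hC : 0 ≤ C)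
    (μ : ℕ → ℝ → Ω → ProbabilityMeasure (EuclideanSpace ℝ (Fin d)))
    -- each `μ j t ω` has finite second moment
    (hmom : ∀ j ω, ∀ t ∈ Set.Icc 0 T,
      Integrable (fun x => ‖x‖ ^ 2) (μ j t ω).toMeasure)
    -- sample paths are continuous with respect to `dBL` on `[0, T]`
    (hcont : ∀ j ω, ∀ t ∈ Set.Icc 0 T, ∀ ε > 0, ∃ δ > 0, ∀ s ∈ Set.Icc (0:ℝ) T,
      |s - t| < δ → dBL ((μ j s ω).toMeasure) ((μ j t ω).toMeasure) < ε)
    -- `t ↦ e^{Ct}(∫ |x|² dμ_j(t) + 1)` is an `(ℱ t)`-submartingale on `[0, T]`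
    (hsubmeas : ∀ j, ∀ t ∈ Set.Icc 0 T,
      StronglyMeasurable[ℱ t]
        (fun ω => Real.exp (C * t) * ((∫ x, ‖x‖ ^ 2 ∂(μ j t ω).toMeasure) + 1)))
    (hsubint : ∀ j, ∀ t ∈ Set.Icc 0 T,
      Integrable (fun ω => Real.exp (C * t) * ((∫ x, ‖x‖ ^ 2 ∂(μ j t ω).toMeasure) + 1)) P)
    (hsub : ∀ j s t, 0 ≤ s → s ≤ t → t ≤ T →
      (fun ω => Real.exp (C * s) * ((∫ x, ‖x‖ ^ 2 ∂(μ j s ω).toMeasure) + 1)) ≤ᵐ[P]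
        P[fun ω => Real.exp (C * t) * ((∫ x, ‖x‖ ^ 2 ∂(μ j t ω).toMeasure) + 1)|ℱ s])
    -- uniformly bounded second moments at time `T`
    (B : ℝ)
    (hB : ∀ j, (∫ ω, (∫ x, ‖x‖ ^ 2 ∂(μ j T ω).toMeasure) ∂P) ≤ B) :
    ∀ δ > 0, ∃ K : Set (ProbabilityMeasure (EuclideanSpace ℝ (Fin d))),
      IsCompact K ∧ ∀ j, ENNReal.ofReal (1 - δ) ≤
        P {ω | ∀ t ∈ Set.Icc 0 T, ∃ η ∈ K,
          dBL ((μ j t ω).toMeasure) (η.toMeasure) < δ} := by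
  intro δ hδ
  have hTmem : T ∈ Set.Icc 0 T := ⟨hT.le, le_rfl⟩
  have hmom_nonneg : ∀ j t ω, 0 ≤ ∫ x, ‖x‖ ^ 2 ∂(μ j t ω).toMeasure :=
    fun _ _ _ => integral_nonneg fun _ => by positivity
  set M := Real.exp (C * T) * (B + 1)
  have hM : 0 < M := by
    have := (integral_nonneg fun ω => hmom_nonneg 0 T ω).trans (hB 0)
    positivity
  refine ⟨closure {ν | Integrable (fun x => ‖x‖ ^ 2) ν.toMeasure ∧
    ∫ x, ‖x‖ ^ 2 ∂ν.toMeasure ≤ M / δ}, isCompact_closure_setOf_integral_norm_sq_le _,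
    fun j => ?_⟩
  have : Nonempty (Set.Icc 0 T) := ⟨⟨T, hTmem⟩⟩
  set u := TopologicalSpace.denseSeq (Set.Icc 0 T)
  have hX : Submartingale (fun t : Set.Icc 0 T => fun ω =>
      Real.exp (C * t) * ((∫ x, ‖x‖ ^ 2 ∂(μ j t ω).toMeasure) + 1)) (ℱ.restrict _) P :=
    ⟨fun t => hsubmeas j t t.2, fun s t hst => hsub j s t s.2.1 hst t.2.2,
      fun t => hsubint j t t.2⟩
  have hbad := hX.measure_exists_div_le_le (fun t ω => by positivity [hmom_nonneg j t ω])
    (T := ⟨T, hTmem⟩) (fun n => (u n).2.2) hM hδ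
    (integral_mul_add_one_le (Real.exp_pos _) (hsubint j T hTmem) (hB j))
  refine ofReal_one_sub_le_measure_of_compl_subset hδ.le hbad fun ω hω t ht => ?_
  simp only [mem_compl_iff, mem_ofPred_eq, not_exists, not_le] at hω
  refine exists_mem_dBL_lt_of_denseRange (TopologicalSpace.denseRange_denseSeq _) (fun n => ?_)
    (hcont j ω) ht hδ
  refine subset_closure ⟨hmom j ω _ (u n).2, ?_⟩
  -- `e^{Ct} ≥ 1` because `C, t ≥ 0`
  refine le_trans ?_ (hω n).le
  exact (le_add_of_nonneg_right zero_le_one).trans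
    (le_mul_of_one_le_left (by positivity [hmom_nonneg j (u n) ω])
      (Real.one_le_exp (mul_nonneg hC (u n).2.1)))

theorem stmt7 {d : ℕ} {Ω : Type*} [mΩ : MeasurableSpace Ω]
    (P : Measure Ω) [IsProbabilityMeasure P]
    (ℱ : Filtration ℝ mΩ) (T C : ℝ) (hT : 0 < T) (hC : 0 ≤ C)
    (μ : ℕ → ℝ → Ω → ProbabilityMeasure (EuclideanSpace ℝ (Fin d)))
    -- each `μ j t ω` has finite second moment
    (hmom : ∀ j ω, ∀ t ∈ Set.Icc 0 T,
      Integrable (fun x => ‖x‖ ^ 2) (μ j t ω).toMeasure)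
    -- the measure-valued processes are adapted to the filtration `ℱ`
    (hadapted : ∀ (f : BoundedContinuousFunction (EuclideanSpace ℝ (Fin d)) ℝ) j,
      ∀ t ∈ Set.Icc 0 T,
      StronglyMeasurable[ℱ t] (fun ω => ∫ x, f x ∂(μ j t ω).toMeasure))
    -- sample paths are continuous with respect to `dBL` on `[0, T]`
    (hcont : ∀ j ω, ∀ t ∈ Set.Icc 0 T, ∀ ε > 0, ∃ δ > 0, ∀ s ∈ Set.Icc (0:ℝ) T,
      |s - t| < δ → dBL ((μ j s ω).toMeasure) ((μ j t ω).toMeasure) < ε)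
    -- `t ↦ e^{Ct}(∫ |x|² dμ_j(t) + 1)` is an `(ℱ t)`-submartingale on `[0, T]`
    (hsubmeas : ∀ j, ∀ t ∈ Set.Icc 0 T,
      StronglyMeasurable[ℱ t]
        (fun ω => Real.exp (C * t) * ((∫ x, ‖x‖ ^ 2 ∂(μ j t ω).toMeasure) + 1)))
    (hsubint : ∀ j, ∀ t ∈ Set.Icc 0 T,
      Integrable (fun ω => Real.exp (C * t) * ((∫ x, ‖x‖ ^ 2 ∂(μ j t ω).toMeasure) + 1)) P)
    (hsub : ∀ j s t, 0 ≤ s → s ≤ t → t ≤ T →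
      (fun ω => Real.exp (C * s) * ((∫ x, ‖x‖ ^ 2 ∂(μ j s ω).toMeasure) + 1)) ≤ᵐ[P]
        P[fun ω => Real.exp (C * t) * ((∫ x, ‖x‖ ^ 2 ∂(μ j t ω).toMeasure) + 1)|ℱ s])
    -- uniformly bounded second moments at time `T`
    (B : ℝ)
    (hB : ∀ j, (∫ ω, (∫ x, ‖x‖ ^ 2 ∂(μ j T ω).toMeasure) ∂P) ≤ B) :
    ∀ δ > 0, ∃ K : Set (ProbabilityMeasure (EuclideanSpace ℝ (Fin d))),
      IsCompact K ∧ ∀ j, ENNReal.ofReal (1 - δ) ≤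
        P {ω | ∀ t ∈ Set.Icc 0 T, ∃ η ∈ K,
          dBL ((μ j t ω).toMeasure) (η.toMeasure) < δ} :=
  stmt7_general (mΩ := mΩ) P ℱ T C hT hC μ hmom hcont hsubmeas hsubint hsub B hB
end

section
/- Let (Ω, F, (F_t)_{t∈[0,T]}, P) be a filtered probability space and C ≥ 0. Let (X_t)_{t∈[0,T]} be an (F_t)-adapted real-valued process with continuous sample paths such that X_t ≥ 0 a.s. and X_t is integrable for each t, and let (A_t)_{t∈[0,T]} be a progressively measurable process with E∫_0^T |A_s| ds < ∞ and |A_t(ω)| ≤ C·X_t(ω) for a.e. (t, ω). Assume that M_t := X_t − X_0 − ∫_0^t A_s ds is an (F_t)-martingale. Then for all 0 ≤ s ≤ t ≤ T, almost surely e^{−C(t−s)} X_s ≤ E(X_t | F_s) ≤ e^{C(t−s)} X_s; in particular, E X_t ≤ e^{Ct} E X_0 for all t ∈ [0,T]. -/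
open MeasureTheory
open scoped ENNReal NNReal

lemma gronwall_int_fwd {h : ℝ → ℝ} {s t C K : ℝ} (hC : 0 ≤ C)
    (hcont : Continuous h)
    (hnn : ∀ u ∈ Set.Icc s t, 0 ≤ h u)
    (hineq : ∀ u ∈ Set.Icc s t, h u ≤ K + C * ∫ v in s..u, h v) :
    ∀ u ∈ Set.Icc s t, h u ≤ K * Real.exp (C * (u - s)) := by
  intro u hu
  set f : ℝ → ℝ := fun u => ∫ v in s..u, h v with hf
  have hfd : ∀ x, HasDerivAt f (h x) x := fun x =>
    intervalIntegral.integral_hasDerivAt_right (hcont.intervalIntegrable s x)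
      (hcont.stronglyMeasurable.stronglyMeasurableAtFilter) hcont.continuousAt
  have hfc : Continuous f := by
    have : Differentiable ℝ f := fun x => (hfd x).differentiableAt
    exact this.continuous
  have hfnn : ∀ x ∈ Set.Icc s t, 0 ≤ f x := by
    intro x hx
    exact intervalIntegral.integral_nonneg hx.1 (fun v hv => hnn v ⟨hv.1, hv.2.trans hx.2⟩)
  have key := norm_le_gronwallBound_of_norm_deriv_right_le (f := f) (f' := h)
    (δ := 0) (K := C) (ε := K) (a := s) (b := t) hfc.continuousOn
    (fun x _ => (hfd x).hasDerivWithinAt)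
    (by simp [hf, intervalIntegral.integral_same])
    (fun x hx => by
      rw [Real.norm_eq_abs, Real.norm_eq_abs, abs_of_nonneg (hnn x (Set.Ico_subset_Icc_self hx)),
        abs_of_nonneg (hfnn x (Set.Ico_subset_Icc_self hx))]
      linarith [hineq x (Set.Ico_subset_Icc_self hx)])
  have hb := key u hu
  rw [Real.norm_eq_abs, abs_of_nonneg (hfnn u hu)] at hb
  have h1 := hineq u hu
  have hx0 : 0 ≤ u - s := sub_nonneg.2 hu.1
  rcases eq_or_ne C 0 with rfl | hCne
  · simpa using h1.trans (by simp)
  · rw [gronwallBound_of_K_ne_0 hCne] at hb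
    have hCpos : 0 < C := lt_of_le_of_ne hC (Ne.symm hCne)
    have : C * f u ≤ K * (Real.exp (C * (u - s)) - 1) := by
      simp only [zero_mul, zero_add] at hb
      have := mul_le_mul_of_nonneg_left hb hC
      calc C * f u ≤ C * (K / C * (Real.exp (C * (u - s)) - 1)) := this
        _ = K * (Real.exp (C * (u - s)) - 1) := by field_simp
    nlinarith [Real.exp_pos (C * (u - s))]

lemma gronwall_int_bwd {h : ℝ → ℝ} {s t C K : ℝ} (hC : 0 ≤ C)
    (hcont : Continuous h)
    (hnn : ∀ u ∈ Set.Icc s t, 0 ≤ h u)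
    (hineq : ∀ u ∈ Set.Icc s t, h u ≤ K + C * ∫ v in u..t, h v) :
    ∀ u ∈ Set.Icc s t, h u ≤ K * Real.exp (C * (t - u)) := by
  intro u hu
  set g : ℝ → ℝ := fun v => h (s + t - v) with hg
  have hmem : ∀ v ∈ Set.Icc s t, s + t - v ∈ Set.Icc s t := fun v hv =>
    ⟨by linarith [hv.2], by linarith [hv.1]⟩
  have key := gronwall_int_fwd (h := g) (s := s) (t := t) (K := K) hC
    (hcont.comp (by continuity))
    (fun v hv => hnn _ (hmem v hv))
    (fun v hv => by
      have : (∫ w in s..v, g w) = ∫ w in (s + t - v)..t, h w := by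
        rw [hg]
        rw [intervalIntegral.integral_comp_sub_left h (s + t)]
        norm_num
      rw [this]
      exact hineq _ (hmem v hv))
  have := key (s + t - u) (hmem u hu)
  simpa [hg, show s + t - (s + t - u) = u by ring, show s + t - u - s = t - u by ring] using this

lemma ae_le_of_forall_subalg_setIntegral_le {Ω : Type*} {m m0 : MeasurableSpace Ω} (hm : m ≤ m0)
    (P : Measure Ω) {f g : Ω → ℝ}
    (hfm : StronglyMeasurable[m] f) (hgm : StronglyMeasurable[m] g)
    (hfi : Integrable f P) (hgi : Integrable g P)
    (hle : ∀ B, MeasurableSet[m] B → ∫ ω in B, f ω ∂P ≤ ∫ ω in B, g ω ∂P) :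
    f ≤ᵐ[P] g := by
  set D := {ω | g ω < f ω} with hD
  have hDm : MeasurableSet[m] D := measurableSet_lt hgm.measurable hfm.measurable
  have hDmeas : MeasurableSet D := hm _ hDm
  have hint : (∫ ω in D, (f ω - g ω) ∂P) ≤ 0 := by
    rw [integral_sub hfi.integrableOn hgi.integrableOn]
    linarith [hle D hDm]
  have hP : P D = 0 := by
    by_contra hne
    have hpos : 0 < P D := pos_iff_ne_zero.mpr hne
    have hnn : 0 ≤ᵐ[P.restrict D] fun ω => f ω - g ω := by
      refine ae_restrict_of_forall_mem hDmeas fun ω hω => ?_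
      exact sub_nonneg.2 (le_of_lt hω)
    have hio : IntegrableOn (fun ω => f ω - g ω) D P :=
      (hfi.sub hgi).integrableOn
    have := (setIntegral_pos_iff_support_of_nonneg_ae hnn hio).mpr ?_
    · linarith
    · have hsub : D ⊆ Function.support fun ω => f ω - g ω := fun ω hω =>
        ne_of_gt (sub_pos.2 hω)
      calc 0 < P D := hpos
        _ = P (Function.support (fun ω => f ω - g ω) ∩ D) := by
            rw [Set.inter_eq_right.2 hsub]
  filter_upwards [measure_eq_zero_iff_ae_notMem.mp hP] with ω hω
  exact not_lt.1 hω
theorem stmt8 {Ω : Type*} [mΩ : MeasurableSpace Ω]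
    (P : Measure Ω) [IsProbabilityMeasure P]
    (ℱ : Filtration ℝ mΩ) (T C : ℝ) (hT : 0 < T) (hC : 0 ≤ C)
    (X A : ℝ → Ω → ℝ)
    (hXadapted : ∀ t ∈ Set.Icc (0:ℝ) T, StronglyMeasurable[ℱ t] (X t))
    (hXcont : ∀ ω, ContinuousOn (fun t => X t ω) (Set.Icc 0 T))
    (hXnonneg : ∀ t ∈ Set.Icc (0:ℝ) T, ∀ᵐ ω ∂P, 0 ≤ X t ω)
    (hXint : ∀ t ∈ Set.Icc (0:ℝ) T, Integrable (X t) P)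
    (hAprog : ProgMeasurable ℱ A)
    (hAint : (∫⁻ ω, (∫⁻ s in Set.Icc (0:ℝ) T, ENNReal.ofReal |A s ω| ∂volume) ∂P) < ⊤)
    (hAbound : ∀ᵐ p ∂(P.prod (volume.restrict (Set.Icc (0:ℝ) T))),
      |A p.2 p.1| ≤ C * X p.2 p.1)
    -- `M t = X t - X 0 - ∫_0^t A_s ds` is a martingale on `[0, T]`
    (hMint : ∀ t ∈ Set.Icc (0:ℝ) T,
      Integrable (fun ω => X t ω - X 0 ω - ∫ u in (0:ℝ)..t, A u ω) P)
    (hM : ∀ s t, 0 ≤ s → s ≤ t → t ≤ T →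
      P[fun ω => X t ω - X 0 ω - ∫ u in (0:ℝ)..t, A u ω|ℱ s] =ᵐ[P]
        fun ω => X s ω - X 0 ω - ∫ u in (0:ℝ)..s, A u ω) :
    (∀ s t, 0 ≤ s → s ≤ t → t ≤ T →
      ∀ᵐ ω ∂P, Real.exp (-C * (t - s)) * X s ω ≤ (P[X t|ℱ s]) ω ∧
        (P[X t|ℱ s]) ω ≤ Real.exp (C * (t - s)) * X s ω) ∧
    (∀ t ∈ Set.Icc (0:ℝ) T, (∫ ω, X t ω ∂P) ≤ Real.exp (C * t) * ∫ ω, X 0 ω ∂P) := by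
  classical
  set μ : Measure ℝ := volume.restrict (Set.Icc (0:ℝ) T) with hμdef
  -- joint measurability of `A`
  have hGmeas : StronglyMeasurable (fun p : Ω × ℝ => A (min p.2 T) p.1) := by
    have h1 := hAprog T
    have hφ : Measurable[_, Subtype.instMeasurableSpace.prod (ℱ T)]
        (fun p : Ω × ℝ => ((⟨min p.2 T, Set.mem_Iic.2 (min_le_right _ _)⟩ : Set.Iic T), p.1)) :=
      (Measurable.subtype_mk (measurable_snd.min measurable_const)).prodMk
        (measurable_fst.mono le_rfl (ℱ.le T))
    exact h1.comp_measurable hφ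
  have hFaesm : AEStronglyMeasurable (fun p : Ω × ℝ => A p.2 p.1) (P.prod μ) := by
    refine ⟨fun p => A (min p.2 T) p.1, hGmeas, ?_⟩
    have hIcc : ∀ᵐ p ∂(P.prod μ), p.2 ∈ Set.Icc (0:ℝ) T := by
      have h2 : ∀ᵐ v ∂μ, v ∈ Set.Icc (0:ℝ) T := ae_restrict_mem measurableSet_Icc
      have h3 : (P.prod μ) {p : Ω × ℝ | p.2 ∉ Set.Icc (0:ℝ) T} = 0 := by
        have : {p : Ω × ℝ | p.2 ∉ Set.Icc (0:ℝ) T} = Set.univ ×ˢ (Set.Icc (0:ℝ) T)ᶜ := by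
          ext p; simp [Set.mem_prod]
        rw [this, Measure.prod_prod]
        have : μ ((Set.Icc (0:ℝ) T)ᶜ) = 0 := by
          rw [hμdef, Measure.restrict_apply measurableSet_Icc.compl]
          simp
        rw [this, mul_zero]
      exact (ae_iff).2 (by simpa using h3)
    filter_upwards [hIcc] with p hp
    rw [min_eq_left hp.2]
  have hFint : Integrable (fun p : Ω × ℝ => A p.2 p.1) (P.prod μ) := by
    refine ⟨hFaesm, ?_⟩
    rw [hasFiniteIntegral_iff_norm]
    calc (∫⁻ p, ENNReal.ofReal ‖A p.2 p.1‖ ∂(P.prod μ))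
        = ∫⁻ ω, ∫⁻ v, ENNReal.ofReal ‖A v ω‖ ∂μ ∂P := by
          exact MeasureTheory.lintegral_prod (fun p => ENNReal.ofReal ‖A p.2 p.1‖)
            (ENNReal.measurable_ofReal.comp_aemeasurable hFaesm.norm.aemeasurable)
      _ < ⊤ := by simpa [Real.norm_eq_abs] using hAint
  have hAslice : ∀ᵐ ω ∂P, IntegrableOn (fun v => A v ω) (Set.Icc 0 T) volume := by
    filter_upwards [hFint.prod_right_ae] with ω hω
    exact hω
  have hFswap : Integrable (fun q : ℝ × Ω => A q.1 q.2) (μ.prod P) := hFint.swap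
  have hbnd2 : ∀ᵐ v ∂μ, ∀ᵐ ω ∂P, |A v ω| ≤ C * X v ω := by
    have hmap : MeasureTheory.ae (μ.prod P)
        = Filter.map Prod.swap (MeasureTheory.ae (P.prod μ)) := by
      rw [← Measure.prod_swap]
      exact ((MeasurableEquiv.prodComm (α := Ω) (β := ℝ)).map_ae (P.prod μ)).symm
    have hsw : ∀ᵐ q ∂(μ.prod P), |A q.1 q.2| ≤ C * X q.1 q.2 := by
      rw [Filter.Eventually, hmap, Filter.mem_map]
      exact hAbound
    exact Measure.ae_ae_of_ae_prod hsw
  have key : ∀ s t, 0 ≤ s → s ≤ t → t ≤ T → ∀ B, MeasurableSet[ℱ s] B →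
      (∫ ω in B, X t ω ∂P) ≤ Real.exp (C * (t - s)) * ∫ ω in B, X s ω ∂P ∧
      Real.exp (-C * (t - s)) * (∫ ω in B, X s ω ∂P) ≤ ∫ ω in B, X t ω ∂P := by
    intro s t hs hst htT B hB
    have hsT : s ≤ T := hst.trans htT
    have hsIcc : s ∈ Set.Icc (0:ℝ) T := ⟨hs, hsT⟩
    have htIcc : t ∈ Set.Icc (0:ℝ) T := ⟨hs.trans hst, htT⟩
    have hBmeas : MeasurableSet B := ℱ.le s _ hB
    set a : ℝ → ℝ := fun v => ∫ ω in B, A v ω ∂P with hadef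
    set h : ℝ → ℝ := fun v => ∫ ω in B, X v ω ∂P with hhdef
    -- integrability over the restricted product
    have hFB : Integrable (fun p : Ω × ℝ => A p.2 p.1) ((P.restrict B).prod μ) := by
      have := hFint.restrict (s := B ×ˢ Set.univ)
      rwa [← Measure.prod_restrict, Measure.restrict_univ] at this
    have haInt : Integrable a μ := by
      have := hFB.swap.integral_prod_left
      exact this
    -- Fubini
    have hFub : ∀ u u', 0 ≤ u → u ≤ u' → u' ≤ T →
        (∫ ω in B, (∫ v in u..u', A v ω) ∂P) = ∫ v in u..u', a v := by
      intro u u' h0u huu' hu'T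
      have hsub : Set.Ioc u u' ⊆ Set.Icc (0:ℝ) T := fun v hv =>
        ⟨h0u.trans (le_of_lt hv.1), hv.2.trans hu'T⟩
      have hres : volume.restrict (Set.Ioc u u') = μ.restrict (Set.Ioc u u') := by
        rw [hμdef, Measure.restrict_restrict measurableSet_Ioc,
          Set.inter_eq_left.2 hsub]
      have hFB2 : Integrable (fun p : Ω × ℝ => A p.2 p.1)
          ((P.restrict B).prod (volume.restrict (Set.Ioc u u'))) := by
        rw [hres]
        have := hFint.restrict (s := B ×ˢ Set.Ioc u u')
        rwa [← Measure.prod_restrict] at this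
      have hswap := MeasureTheory.integral_integral_swap
        (f := fun ω v => A v ω) (μ := P.restrict B) (ν := volume.restrict (Set.Ioc u u')) hFB2
      rw [intervalIntegral.integral_of_le huu']
      simp_rw [intervalIntegral.integral_of_le huu']
      exact hswap
    -- the martingale identity integrated over B
    have step1 : ∀ u u', s ≤ u → u ≤ u' → u' ≤ T →
        h u' = h u + ∫ v in u..u', a v := by
      intro u u' hsu huu' hu'T
      have h0u : 0 ≤ u := hs.trans hsu
      have huIcc : u ∈ Set.Icc (0:ℝ) T := ⟨h0u, huu'.trans hu'T⟩
      have hu'Icc : u' ∈ Set.Icc (0:ℝ) T := ⟨h0u.trans huu', hu'T⟩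
      have h0Icc : (0:ℝ) ∈ Set.Icc (0:ℝ) T := ⟨le_refl _, le_of_lt hT⟩
      have hBu : MeasurableSet[ℱ u] B := ℱ.mono hsu _ hB
      have e1 : (∫ ω in B, (X u' ω - X 0 ω - ∫ v in (0:ℝ)..u', A v ω) ∂P)
          = ∫ ω in B, (X u ω - X 0 ω - ∫ v in (0:ℝ)..u, A v ω) ∂P := by
        rw [← setIntegral_condExp (ℱ.le u) (hMint u' hu'Icc) hBu]
        exact setIntegral_congr_ae hBmeas ((hM u u' h0u huu' hu'T).mono fun ω hω _ => hω)
      have hIu' : Integrable (fun ω => ∫ v in (0:ℝ)..u', A v ω) P := by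
        have := ((hXint u' hu'Icc).sub (hXint 0 h0Icc)).sub (hMint u' hu'Icc)
        exact this.congr (Filter.Eventually.of_forall fun ω => by simp only [Pi.sub_apply]; ring)
      have hIu : Integrable (fun ω => ∫ v in (0:ℝ)..u, A v ω) P := by
        have := ((hXint u huIcc).sub (hXint 0 h0Icc)).sub (hMint u huIcc)
        exact this.congr (Filter.Eventually.of_forall fun ω => by simp only [Pi.sub_apply]; ring)
      have i1 : Integrable (fun ω => X u' ω - X 0 ω) P := (hXint u' hu'Icc).sub (hXint 0 h0Icc)
      have i2 : Integrable (fun ω => X u ω - X 0 ω) P := (hXint u huIcc).sub (hXint 0 h0Icc)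
      have e2 : (∫ ω in B, X u' ω ∂P) - ∫ ω in B, (∫ v in (0:ℝ)..u', A v ω) ∂P
          = (∫ ω in B, X u ω ∂P) - ∫ ω in B, (∫ v in (0:ℝ)..u, A v ω) ∂P := by
        have l1 : (∫ ω in B, (X u' ω - X 0 ω - ∫ v in (0:ℝ)..u', A v ω) ∂P)
            = (∫ ω in B, X u' ω ∂P) - (∫ ω in B, X 0 ω ∂P)
              - ∫ ω in B, (∫ v in (0:ℝ)..u', A v ω) ∂P := by
          rw [integral_sub i1.integrableOn hIu'.integrableOn,
            integral_sub (hXint u' hu'Icc).integrableOn (hXint 0 h0Icc).integrableOn]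
        have l2 : (∫ ω in B, (X u ω - X 0 ω - ∫ v in (0:ℝ)..u, A v ω) ∂P)
            = (∫ ω in B, X u ω ∂P) - (∫ ω in B, X 0 ω ∂P)
              - ∫ ω in B, (∫ v in (0:ℝ)..u, A v ω) ∂P := by
          rw [integral_sub i2.integrableOn hIu.integrableOn,
            integral_sub (hXint u huIcc).integrableOn (hXint 0 h0Icc).integrableOn]
        rw [l1, l2] at e1
        linarith
      have hsplit : ∀ᵐ ω ∂P, (∫ v in (0:ℝ)..u', A v ω) - (∫ v in (0:ℝ)..u, A v ω)
          = ∫ v in u..u', A v ω := by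
        filter_upwards [hAslice] with ω hω
        have h1 : IntervalIntegrable (fun v => A v ω) volume 0 u := by
          refine (hω.mono_set ?_).intervalIntegrable
          rw [Set.uIcc_of_le h0u]
          exact Set.Icc_subset_Icc le_rfl (huu'.trans hu'T)
        have h2 : IntervalIntegrable (fun v => A v ω) volume u u' := by
          refine (hω.mono_set ?_).intervalIntegrable
          rw [Set.uIcc_of_le huu']
          exact Set.Icc_subset_Icc h0u hu'T
        rw [← intervalIntegral.integral_add_adjacent_intervals h1 h2]
        ring
      have e3 : (∫ ω in B, (∫ v in (0:ℝ)..u', A v ω) ∂P)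
          - ∫ ω in B, (∫ v in (0:ℝ)..u, A v ω) ∂P
          = ∫ ω in B, (∫ v in u..u', A v ω) ∂P := by
        rw [← integral_sub hIu'.integrableOn hIu.integrableOn]
        exact setIntegral_congr_ae hBmeas (hsplit.mono fun ω hω _ => hω)
      have := hFub u u' h0u huu' hu'T
      rw [hhdef]
      simp only
      linarith [e2, e3, this]
    have haInt' : IntegrableOn a (Set.Icc 0 T) volume := haInt
    set aI : ℝ → ℝ := (Set.Icc (0:ℝ) T).indicator a with haIdef
    have haIint : Integrable aI volume := by
      rw [haIdef, integrable_indicator_iff measurableSet_Icc]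
      exact haInt'
    set H : ℝ → ℝ := fun u => h s + ∫ v in s..u, aI v with hHdef
    have hHcont : Continuous H := continuous_const.add (haIint.continuous_primitive s)
    have hIccsub : Set.Icc s t ⊆ Set.Icc (0:ℝ) T := Set.Icc_subset_Icc hs htT
    have hHa : ∀ u ∈ Set.Icc s t, H u = h u := by
      intro u hu
      have heq : (∫ v in s..u, aI v) = ∫ v in s..u, a v := by
        apply intervalIntegral.integral_congr
        intro v hv
        rw [Set.uIcc_of_le hu.1] at hv
        exact Set.indicator_of_mem (hIccsub ⟨hv.1, hv.2.trans hu.2⟩) a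
      rw [hHdef]
      simp only
      rw [heq, ← step1 s u le_rfl hu.1 (hu.2.trans htT)]
    have hHnn : ∀ u ∈ Set.Icc s t, 0 ≤ H u := by
      intro u hu
      rw [hHa u hu, hhdef]
      exact setIntegral_nonneg_ae hBmeas
        ((hXnonneg u (hIccsub hu)).mono fun ω hω _ => hω)
    have habnd : ∀ᵐ v ∂μ, |a v| ≤ C * h v := by
      filter_upwards [hbnd2, hFswap.prod_right_ae, ae_restrict_mem measurableSet_Icc]
        with v hv hvint hvIcc
      have hXv := hXint v hvIcc
      calc |a v| = ‖∫ ω in B, A v ω ∂P‖ := (Real.norm_eq_abs _).symm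
        _ ≤ ∫ ω in B, ‖A v ω‖ ∂P := norm_integral_le_integral_norm _
        _ ≤ ∫ ω in B, C * X v ω ∂P := by
            refine integral_mono_ae hvint.norm.integrableOn
              ((hXv.const_mul C).integrableOn)
              (ae_restrict_of_ae (hv.mono fun ω h1 => by
                simpa [Real.norm_eq_abs] using h1))
        _ = C * h v := by rw [hhdef]; exact integral_const_mul C _
    have habndH : ∀ u ∈ Set.Icc s t,
        ∀ᵐ v ∂(volume.restrict (Set.Icc s u)), a v ≤ C * H v ∧ -a v ≤ C * H v := by
      intro u hu
      have hsub : Set.Icc s u ⊆ Set.Icc (0:ℝ) T := fun v hv =>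
        hIccsub ⟨hv.1, hv.2.trans hu.2⟩
      have h1 : ∀ᵐ v ∂(volume.restrict (Set.Icc s u)), |a v| ≤ C * h v :=
        ae_restrict_of_ae_restrict_of_subset hsub habnd
      filter_upwards [h1, ae_restrict_mem measurableSet_Icc] with v hv hvm
      have hHv : H v = h v := hHa v ⟨hvm.1, hvm.2.trans hu.2⟩
      rw [hHv]
      exact ⟨(le_abs_self _).trans hv, (neg_le_abs _).trans hv⟩
    have hineqF : ∀ u ∈ Set.Icc s t, H u ≤ h s + C * ∫ v in s..u, H v := by
      intro u hu
      have hIa : IntervalIntegrable a volume s u := by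
        refine (haInt'.mono_set ?_).intervalIntegrable
        rw [Set.uIcc_of_le hu.1]
        exact fun v hv => hIccsub ⟨hv.1, hv.2.trans hu.2⟩
      have hIH : IntervalIntegrable (fun v => C * H v) volume s u :=
        (continuous_const.mul hHcont).intervalIntegrable s u
      have hmono : (∫ v in s..u, a v) ≤ ∫ v in s..u, C * H v :=
        intervalIntegral.integral_mono_ae_restrict hu.1 hIa hIH
          ((habndH u hu).mono fun v hv => hv.1)
      rw [intervalIntegral.integral_const_mul] at hmono
      rw [hHa u hu, step1 s u le_rfl hu.1 (hu.2.trans htT)]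
      linarith
    have hineqB : ∀ u ∈ Set.Icc s t, H u ≤ h t + C * ∫ v in u..t, H v := by
      intro u hu
      have hIa : IntervalIntegrable (fun v => -a v) volume u t := by
        refine ((haInt'.mono_set ?_).intervalIntegrable).neg
        rw [Set.uIcc_of_le hu.2]
        exact fun v hv => hIccsub ⟨hu.1.trans hv.1, hv.2⟩
      have hIH : IntervalIntegrable (fun v => C * H v) volume u t :=
        (continuous_const.mul hHcont).intervalIntegrable u t
      have hbd : ∀ᵐ v ∂(volume.restrict (Set.Icc u t)), -a v ≤ C * H v := by
        have := habndH t (Set.right_mem_Icc.2 hst)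
        have h2 : ∀ᵐ v ∂(volume.restrict (Set.Icc u t)), a v ≤ C * H v ∧ -a v ≤ C * H v :=
          ae_restrict_of_ae_restrict_of_subset (Set.Icc_subset_Icc hu.1 le_rfl) this
        exact h2.mono fun v hv => hv.2
      have hmono : (∫ v in u..t, -a v) ≤ ∫ v in u..t, C * H v :=
        intervalIntegral.integral_mono_ae_restrict hu.2 hIa hIH hbd
      rw [intervalIntegral.integral_const_mul] at hmono
      rw [intervalIntegral.integral_neg] at hmono
      have hstep := step1 u t hu.1 hu.2 htT
      rw [hHa u hu]
      linarith
    have hGF := gronwall_int_fwd (h := H) (s := s) (t := t) (K := h s) hC hHcont hHnn hineqF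
      t (Set.right_mem_Icc.2 hst)
    rw [hHa t (Set.right_mem_Icc.2 hst)] at hGF
    have hGB := gronwall_int_bwd (h := H) (s := s) (t := t) (K := h t) hC hHcont hHnn hineqB
      s (Set.left_mem_Icc.2 hst)
    rw [hHa s (Set.left_mem_Icc.2 hst)] at hGB
    constructor
    · rw [mul_comm]
      exact hGF
    · have hepos : (0:ℝ) < Real.exp (C * (t - s)) := Real.exp_pos _
      rw [neg_mul, Real.exp_neg]
      have h2 : (Real.exp (C * (t - s)))⁻¹ * h s
          ≤ (Real.exp (C * (t - s)))⁻¹ * (h t * Real.exp (C * (t - s))) := by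
        have : t - s = t - s := rfl
        exact mul_le_mul_of_nonneg_left (by simpa [mul_comm] using hGB) (inv_nonneg.2 hepos.le)
      calc (Real.exp (C * (t - s)))⁻¹ * (∫ ω in B, X s ω ∂P)
          ≤ (Real.exp (C * (t - s)))⁻¹ * (h t * Real.exp (C * (t - s))) := h2
        _ = h t := by field_simp
  refine ⟨?_, ?_⟩
  · intro s t hs hst htT
    have hsIcc : s ∈ Set.Icc (0:ℝ) T := ⟨hs, hst.trans htT⟩
    have htIcc : t ∈ Set.Icc (0:ℝ) T := ⟨hs.trans hst, htT⟩
    have hXsmeas := hXadapted s hsIcc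
    have upper : P[X t|ℱ s] ≤ᵐ[P] fun ω => Real.exp (C * (t - s)) * X s ω := by
      refine ae_le_of_forall_subalg_setIntegral_le (ℱ.le s) P
        stronglyMeasurable_condExp (hXsmeas.const_mul _)
        integrable_condExp ((hXint s hsIcc).const_mul _) ?_
      intro B hB
      rw [setIntegral_condExp (ℱ.le s) (hXint t htIcc) hB]
      calc (∫ ω in B, X t ω ∂P) ≤ Real.exp (C * (t - s)) * ∫ ω in B, X s ω ∂P :=
            (key s t hs hst htT B hB).1
        _ = ∫ ω in B, Real.exp (C * (t - s)) * X s ω ∂P :=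
            (integral_const_mul _ _).symm
    have lower : (fun ω => Real.exp (-C * (t - s)) * X s ω) ≤ᵐ[P] P[X t|ℱ s] := by
      refine ae_le_of_forall_subalg_setIntegral_le (ℱ.le s) P
        (hXsmeas.const_mul _) stronglyMeasurable_condExp
        ((hXint s hsIcc).const_mul _) integrable_condExp ?_
      intro B hB
      rw [setIntegral_condExp (ℱ.le s) (hXint t htIcc) hB]
      calc (∫ ω in B, Real.exp (-C * (t - s)) * X s ω ∂P)
          = Real.exp (-C * (t - s)) * ∫ ω in B, X s ω ∂P := integral_const_mul _ _
        _ ≤ ∫ ω in B, X t ω ∂P := (key s t hs hst htT B hB).2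
    filter_upwards [upper, lower] with ω h1 h2
    exact ⟨h2, h1⟩
  · intro t ht
    have := (key 0 t le_rfl ht.1 ht.2 Set.univ MeasurableSet.univ).1
    simpa [Measure.restrict_univ] using this
end
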